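/- For every integer k ≥ 2, the graph G_k (defined below) satisfies sd(u,v) ≥ k for every pair of distinct vertices u, v; hence the class of ABC graphs, and hence the class of interval graphs, has unbounded symmetric difference. -/

import Mathlib

open Finset
open scoped Classical

variable {V : Type*}

/-- `sdPair G x y`: the number of vertices other than `x, y` adjacent to exactly
one of `x` and `y`. -/
noncomputable def sdPair [Fintype V] (G : SimpleGraph V) (x y : V) : ℕ :=
  (univ.filter fun z => z ≠ x ∧ z ≠ y ∧ ¬(G.Adj z x ↔ G.Adj z y)).card

/-- The set `B = ⋃_{i,j ∈ [k]} B_{ij} ⊆ ℤ²`, where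
`B₁₁ = {(pk − q, qk + p) : 1 ≤ p ≤ k, 0 ≤ q ≤ k − 1}` and
`B_{ij} = B₁₁ + ((i−1)k², (j−1)k²)`. -/
noncomputable def Bset (k : ℕ) : Finset (ℤ × ℤ) :=
  ((Finset.Icc (1 : ℤ) k ×ˢ Finset.Icc (0 : ℤ) ((k : ℤ) - 1)) ×ˢ
      (Finset.Icc (1 : ℤ) k ×ˢ Finset.Icc (1 : ℤ) k)).image
    fun x => (x.1.1 * k - x.1.2 + (x.2.1 - 1) * (k : ℤ) ^ 2,
              x.1.2 * k + x.1.1 + (x.2.2 - 1) * (k : ℤ) ^ 2)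

/-- Vertices of the graph `G_k`: the clique `A = {a_1, …, a_{k³}}`, the clique `B`
(one vertex for each point of `Bset k`), and the clique `C = {c_1, …, c_{k³}}`.
Here `Fin (k^3)` index `i` represents `a_{i+1}` (resp. `c_{i+1}`). -/
abbrev GkVtx (k : ℕ) := Fin (k ^ 3) ⊕ ({ b : ℤ × ℤ // b ∈ Bset k } ⊕ Fin (k ^ 3))

/-- The underlying relation of `G_k`: `A`, `B`, `C` are cliques, `a_i` is adjacent
to `(b_x, b_y) ∈ B` iff `i < b_x`, `(b_x, b_y)` is adjacent to `c_j` iff `b_y < j`,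
and there are no `A`–`C` edges. -/
def GkRel (k : ℕ) : GkVtx k → GkVtx k → Prop
  | Sum.inl i, Sum.inl j => i ≠ j
  | Sum.inl i, Sum.inr (Sum.inl b) => (i : ℤ) + 1 < b.1.1
  | Sum.inr (Sum.inl b), Sum.inr (Sum.inl b') => b ≠ b'
  | Sum.inr (Sum.inl b), Sum.inr (Sum.inr j) => b.1.2 < (j : ℤ) + 1
  | Sum.inr (Sum.inr i), Sum.inr (Sum.inr j) => i ≠ j
  | _, _ => False

/-- The graph `G_k`. -/
def Gk (k : ℕ) : SimpleGraph (GkVtx k) := SimpleGraph.fromRel (GkRel k)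

/-- `H` is an ABC graph: its vertex set splits into three cliques `A`, `B`, `C` of
equal size `n` with no `A`–`C` edges, such that the `A`–`B` edges and the `B`–`C`
edges each form a half graph (under independent orderings of `B`). -/
def IsABCGraph {W : Type*} (H : SimpleGraph W) : Prop :=
  ∃ (n : ℕ) (e : Fin 3 × Fin n ≃ W) (α β : Equiv.Perm (Fin n)),
    (∀ m : Fin 3, ∀ i j : Fin n, H.Adj (e (m, i)) (e (m, j)) ↔ i ≠ j) ∧
    (∀ i j, H.Adj (e (0, i)) (e (1, j)) ↔ i < α j) ∧
    (∀ i j, H.Adj (e (1, i)) (e (2, j)) ↔ β i < j) ∧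
    (∀ i j, ¬ H.Adj (e (0, i)) (e (2, j)))

/-- `G` is an interval graph. -/
def IsIntervalGraph (G : SimpleGraph V) : Prop :=
  ∃ L R : V → ℝ, (∀ v, L v ≤ R v) ∧
    ∀ u v, G.Adj u v ↔ u ≠ v ∧ L u ≤ R v ∧ L v ≤ R u

/-!
For `a_i, a_{i'}` with `i < i'`, the `k` points of `B` in column `i'` see `a_i` but not `a_{i'}`;
rows play the same role for two vertices of `C`. A vertex of `A` and one of `C` are told apart by
the rest of `A`. A point `b ∈ B` and a vertex of `A` are told apart by the rest of `A` if `b` has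
no neighbour in `A`, and by the points of column `1` otherwise; symmetrically for `C`, with row
`k³`. Finally, two points of `B` are at ℓ¹-distance at least `k`, and every unit of horizontal
(vertical) distance between them yields a vertex of `A` (of `C`) adjacent to exactly one of them.

Ordering `B` by `(x, y)` lexicographically for the `A`–`B` half graph and by `(y, x)` for the
`B`–`C` half graph embeds `G_k` as an induced subgraph of an ABC graph; as ABC graphs are interval
graphs, so is `G_k`.
-/

def Distinguishes {V : Type*} (G : SimpleGraph V) (z x y : V) : Prop :=
  z ≠ x ∧ z ≠ y ∧ ¬(G.Adj z x ↔ G.Adj z y)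

section sdPair

variable {V W : Type*} [Fintype V] [Fintype W] {G : SimpleGraph V} {H : SimpleGraph W}

lemma sdPair_comm (G : SimpleGraph V) (x y : V) : sdPair G x y = sdPair G y x := by
  unfold sdPair
  congr 1
  ext z
  simp only [mem_filter, mem_univ, true_and]
  tauto

lemma card_le_sdPair {x y : V} {s : Finset V} (hs : ∀ z ∈ s, Distinguishes G z x y) :
    #s ≤ sdPair G x y :=
  card_le_card fun z hz => mem_filter.2 ⟨mem_univ z, hs z hz⟩

lemma SimpleGraph.Iso.sdPair_apply (e : G ≃g H) (x y : V) :
    sdPair H (e x) (e y) = sdPair G x y := by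
  refine (card_equiv e.toEquiv fun z => ?_).symm
  simp only [mem_filter, mem_univ, true_and, RelIso.coe_fn_toEquiv, e.map_adj_iff,
    e.injective.ne_iff]

lemma SimpleGraph.Iso.le_sdPair {d : ℕ} (e : G ≃g H) (h : ∀ u v, u ≠ v → d ≤ sdPair G u v)
    (u v : W) (huv : u ≠ v) : d ≤ sdPair H u v := by
  rw [← e.apply_symm_apply u, ← e.apply_symm_apply v, e.sdPair_apply]
  exact h _ _ (e.symm.injective.ne huv)

end sdPair

lemma SimpleGraph.Embedding.exists_iso_induce {V W : Type*} [Fintype V] {G : SimpleGraph V}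
    {H : SimpleGraph W} (f : G ↪g H) :
    ∃ s : Finset W, #s = Fintype.card V ∧ Nonempty (G ≃g H.induce (s : Set W)) := by
  refine ⟨univ.map f.toEmbedding, by rw [card_map, card_univ], ?_⟩
  rw [coe_map, coe_univ, Set.image_univ]
  exact ⟨f.isoInduceRange⟩

section IntervalGraph

variable {V W : Type*}

lemma isIntervalGraph_of_int {G : SimpleGraph V} (L R : V → ℤ) (hLR : ∀ v, L v ≤ R v)
    (hadj : ∀ u v, G.Adj u v ↔ u ≠ v ∧ L u ≤ R v ∧ L v ≤ R u) : IsIntervalGraph G :=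
  ⟨fun v => L v, fun v => R v, fun v => Int.cast_le.2 (hLR v), fun u v => by
    simpa only [Int.cast_le] using hadj u v⟩

lemma IsIntervalGraph.of_embedding {G : SimpleGraph V} {H : SimpleGraph W} (f : G ↪g H)
    (hH : IsIntervalGraph H) : IsIntervalGraph G := by
  obtain ⟨L, R, hLR, hadj⟩ := hH
  refine ⟨L ∘ f, R ∘ f, fun v => hLR _, fun u v => ?_⟩
  rw [← f.map_adj_iff, hadj, f.injective.ne_iff]
  rfl

theorem IsABCGraph.isIntervalGraph {H : SimpleGraph W} (hH : IsABCGraph H) :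
    IsIntervalGraph H := by
  obtain ⟨n, e, α, β, hsame, h01, h12, h02⟩ := hH
  -- The intervals of `A` all contain `-n`, those of `B` contain `1`, those of `C` contain `n + 1`.
  let L : Fin 3 × Fin n → ℤ := fun p =>
    ![-(n : ℤ), 1 - ((α p.2 : ℕ) : ℤ), n + 1 - ((p.2 : ℕ) : ℤ)] p.1
  let R : Fin 3 × Fin n → ℤ := fun p =>
    ![-((p.2 : ℕ) : ℤ), n - ((β p.2 : ℕ) : ℤ), n + 1] p.1
  refine isIntervalGraph_of_int (L ∘ e.symm) (R ∘ e.symm) (fun w => ?_) fun u v => ?_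
  · obtain ⟨⟨m, i⟩, rfl⟩ := e.surjective w
    fin_cases m <;> simp [L, R]
    omega
  · obtain ⟨⟨m, i⟩, rfl⟩ := e.surjective u
    obtain ⟨⟨m', j⟩, rfl⟩ := e.surjective v
    fin_cases m <;> fin_cases m' <;>
      simp [L, R, hsame, h01, h12, h02, H.adj_comm (e (1, i)), H.adj_comm (e (2, i)),
        Prod.ext_iff, Fin.ext_iff] <;>
      omega

end IntervalGraph

def abcGraph (n : ℕ) (α β : Equiv.Perm (Fin n)) : SimpleGraph (Fin 3 × Fin n) :=
  SimpleGraph.fromRel fun u v =>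
    u.1 = v.1 ∨ (u.1 = 0 ∧ v.1 = 1 ∧ u.2 < α v.2) ∨ (u.1 = 1 ∧ v.1 = 2 ∧ β u.2 < v.2)

theorem isABCGraph_abcGraph (n : ℕ) (α β : Equiv.Perm (Fin n)) :
    IsABCGraph (abcGraph n α β) :=
  ⟨n, Equiv.refl _, α, β, by simp [abcGraph], by simp [abcGraph], by simp [abcGraph],
    by simp [abcGraph]⟩

lemma card_filter_fin_Ico {N : ℕ} {lo hi : ℤ} (hlo : 0 ≤ lo) (hhi : hi ≤ N) :
    #{i : Fin N | lo ≤ i ∧ (i : ℤ) < hi} = (hi - lo).toNat := by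
  rw [← Int.card_Ico]
  refine card_bij (fun i _ => (i : ℤ)) (fun i hi => by simpa using hi)
    (fun i _ i' _ h => Fin.ext (by exact_mod_cast h)) fun m hm => ?_
  rw [mem_Ico] at hm
  exact ⟨⟨m.toNat, by omega⟩, by simp; omega, by simp; omega⟩

abbrev GridVtx (N : ℕ) (S : Finset (ℤ × ℤ)) := Fin N ⊕ ({ b : ℤ × ℤ // b ∈ S } ⊕ Fin N)

/-- The graph `G_k` with `k³` replaced by `N` and `B` by an arbitrary set `S` of points. -/
def gridRel (N : ℕ) (S : Finset (ℤ × ℤ)) : GridVtx N S → GridVtx N S → Prop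
  | .inl i, .inl j => i ≠ j
  | .inl i, .inr (.inl b) => (i : ℤ) + 1 < b.1.1
  | .inr (.inl b), .inr (.inl b') => b ≠ b'
  | .inr (.inl b), .inr (.inr j) => b.1.2 < (j : ℤ) + 1
  | .inr (.inr i), .inr (.inr j) => i ≠ j
  | _, _ => False

def gridGraph (N : ℕ) (S : Finset (ℤ × ℤ)) : SimpleGraph (GridVtx N S) :=
  SimpleGraph.fromRel (gridRel N S)

section gridGraph

variable {N d : ℕ} {S : Finset (ℤ × ℤ)}

lemma card_le_sdPair_gridGraph {u v : GridVtx N S} {T : Finset (ℤ × ℤ)} (hT : T ⊆ S)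
    (h : ∀ b (hb : b ∈ T), Distinguishes (gridGraph N S) (.inr (.inl ⟨b, hT hb⟩)) u v) :
    #T ≤ sdPair (gridGraph N S) u v := by
  let emb : { b // b ∈ S } ↪ GridVtx N S := Function.Embedding.inl.trans Function.Embedding.inr
  calc #T = #((T.subtype (· ∈ S)).map emb) := by
        rw [card_map, card_subtype, filter_true_of_mem hT]
    _ ≤ _ := card_le_sdPair ?_
  simp only [mem_map, mem_subtype]
  rintro _ ⟨b, hb, rfl⟩
  exact h b.1 hb

lemma gridGraph_le_sdPair_inl_inl (hcol : ∀ x : ℤ, 1 ≤ x → x ≤ N → d ≤ #{b ∈ S | b.1 = x})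
    {i i' : Fin N} (h : i < i') : d ≤ sdPair (gridGraph N S) (.inl i) (.inl i') := by
  refine (hcol (i' + 1) (by omega) (by omega)).trans
    (card_le_sdPair_gridGraph (filter_subset _ _) fun b hb => ?_)
  have hbx := (mem_filter.1 hb).2
  simp [Distinguishes, gridGraph, gridRel]
  omega

lemma gridGraph_le_sdPair_inr_inr (hrow : ∀ y : ℤ, 1 ≤ y → y ≤ N → d ≤ #{b ∈ S | b.2 = y})
    {j j' : Fin N} (h : j < j') :
    d ≤ sdPair (gridGraph N S) (.inr (.inr j)) (.inr (.inr j')) := by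
  refine (hrow (j + 1) (by omega) (by omega)).trans
    (card_le_sdPair_gridGraph (filter_subset _ _) fun b hb => ?_)
  have hby := (mem_filter.1 hb).2
  simp [Distinguishes, gridGraph, gridRel]
  omega

lemma gridGraph_le_sdPair_inl_inr_inr (hdN : d < N) (i j : Fin N) :
    d ≤ sdPair (gridGraph N S) (.inl i) (.inr (.inr j)) := by
  calc d ≤ #((univ.erase i).map .inl) := by simp; omega
    _ ≤ _ := card_le_sdPair ?_
  simp +contextual [Distinguishes, gridGraph, gridRel]

lemma gridGraph_le_sdPair_inl_inr_inl (hcol : ∀ x : ℤ, 1 ≤ x → x ≤ N → d ≤ #{b ∈ S | b.1 = x})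
    (hdN : d < N) (i : Fin N) (b : { b // b ∈ S }) :
    d ≤ sdPair (gridGraph N S) (.inl i) (.inr (.inl b)) := by
  by_cases hb : b.1.1 ≤ 1
  · calc d ≤ #((univ.erase i).map .inl) := by simp; omega
      _ ≤ _ := card_le_sdPair ?_
    simp +contextual [Distinguishes, gridGraph, gridRel]
    intro a _
    omega
  · refine (hcol 1 le_rfl (by omega)).trans
      (card_le_sdPair_gridGraph (filter_subset _ _) fun b' hb' => ?_)
    have hbx := (mem_filter.1 hb').2
    have hne : b' ≠ b.1 := by rintro rfl; omega
    simp [Distinguishes, gridGraph, gridRel, Subtype.ext_iff, hne, hne.symm]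
    omega

lemma gridGraph_le_sdPair_inr_inl_inr_inr
    (hrow : ∀ y : ℤ, 1 ≤ y → y ≤ N → d ≤ #{b ∈ S | b.2 = y})
    (hdN : d < N) (b : { b // b ∈ S }) (j : Fin N) :
    d ≤ sdPair (gridGraph N S) (.inr (.inl b)) (.inr (.inr j)) := by
  by_cases hb : N ≤ b.1.2
  · calc d ≤ #((univ.erase j).map (Function.Embedding.inr.trans Function.Embedding.inr)) := by
          simp; omega
      _ ≤ _ := card_le_sdPair ?_
    simp +contextual [Distinguishes, gridGraph, gridRel]
    intro a _
    omega
  · refine (hrow N (by omega) le_rfl).trans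
      (card_le_sdPair_gridGraph (filter_subset _ _) fun b' hb' => ?_)
    have hby := (mem_filter.1 hb').2
    have hne : b' ≠ b.1 := by rintro rfl; omega
    simp [Distinguishes, gridGraph, gridRel, Subtype.ext_iff, hne, hne.symm]
    omega

lemma gridGraph_le_sdPair_inr_inl_inr_inl (hbox : S ⊆ Icc 1 (N : ℤ) ×ˢ Icc 1 (N : ℤ))
    (hsep : ∀ b ∈ S, ∀ b' ∈ S, b ≠ b' → d ≤ |b.1 - b'.1| + |b.2 - b'.2|)
    {b b' : { b // b ∈ S }} (h : b ≠ b') :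
    d ≤ sdPair (gridGraph N S) (.inr (.inl b)) (.inr (.inl b')) := by
  have hb := hbox b.2
  have hb' := hbox b'.2
  simp only [mem_product, mem_Icc] at hb hb'
  have hsum := hsep _ b.2 _ b'.2 (Subtype.coe_ne_coe.2 h)
  rw [abs_eq_max_neg, abs_eq_max_neg] at hsum
  let sA : Finset (Fin N) := {i | min b.1.1 b'.1.1 - 1 ≤ i ∧ (i : ℤ) < max b.1.1 b'.1.1 - 1}
  let sC : Finset (Fin N) := {j | min b.1.2 b'.1.2 ≤ j ∧ (j : ℤ) < max b.1.2 b'.1.2}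
  have hA : #sA = (max b.1.1 b'.1.1 - 1 - (min b.1.1 b'.1.1 - 1)).toNat :=
    card_filter_fin_Ico (by omega) (by omega)
  have hC : #sC = (max b.1.2 b'.1.2 - min b.1.2 b'.1.2).toNat :=
    card_filter_fin_Ico (by omega) (by omega)
  calc d ≤ #(sA.disjSum ((∅ : Finset { b // b ∈ S }).disjSum sC)) := by
        rw [card_disjSum, card_disjSum, hA, hC, card_empty]
        omega
    _ ≤ _ := card_le_sdPair ?_
  rintro (i | b'' | j) hz
  · simp only [inl_mem_disjSum, sA, mem_filter, mem_univ, true_and] at hz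
    simp [Distinguishes, gridGraph, gridRel]
    omega
  · simp at hz
  · simp only [inr_mem_disjSum, sC, mem_filter, mem_univ, true_and] at hz
    simp [Distinguishes, gridGraph, gridRel]
    omega

theorem gridGraph_le_sdPair (hbox : S ⊆ Icc 1 (N : ℤ) ×ˢ Icc 1 (N : ℤ))
    (hcol : ∀ x : ℤ, 1 ≤ x → x ≤ N → d ≤ #{b ∈ S | b.1 = x})
    (hrow : ∀ y : ℤ, 1 ≤ y → y ≤ N → d ≤ #{b ∈ S | b.2 = y})
    (hsep : ∀ b ∈ S, ∀ b' ∈ S, b ≠ b' → d ≤ |b.1 - b'.1| + |b.2 - b'.2|) (hdN : d < N)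
    (u v : GridVtx N S) (huv : u ≠ v) : d ≤ sdPair (gridGraph N S) u v := by
  rcases u with i | b | j <;> rcases v with i' | b' | j'
  · rcases Ne.lt_or_gt (fun h => huv (h ▸ rfl) : i ≠ i') with h | h
    · exact gridGraph_le_sdPair_inl_inl hcol h
    · exact sdPair_comm (gridGraph N S) _ _ ▸ gridGraph_le_sdPair_inl_inl hcol h
  · exact gridGraph_le_sdPair_inl_inr_inl hcol hdN i b'
  · exact gridGraph_le_sdPair_inl_inr_inr hdN i j'
  · exact sdPair_comm (gridGraph N S) _ _ ▸ gridGraph_le_sdPair_inl_inr_inl hcol hdN i' b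
  · exact gridGraph_le_sdPair_inr_inl_inr_inl hbox hsep fun h => huv (h ▸ rfl)
  · exact gridGraph_le_sdPair_inr_inl_inr_inr hrow hdN b j'
  · exact sdPair_comm (gridGraph N S) _ _ ▸ gridGraph_le_sdPair_inl_inr_inr hdN i' j
  · exact sdPair_comm (gridGraph N S) _ _ ▸ gridGraph_le_sdPair_inr_inl_inr_inr hrow hdN b' j
  · rcases Ne.lt_or_gt (fun h => huv (h ▸ rfl) : j ≠ j') with h | h
    · exact gridGraph_le_sdPair_inr_inr hrow h
    · exact sdPair_comm (gridGraph N S) _ _ ▸ gridGraph_le_sdPair_inr_inr hrow h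

end gridGraph

lemma finProdFinEquiv_lt_finProdFinEquiv {m n : ℕ} {a b : Fin m × Fin n} :
    finProdFinEquiv a < finProdFinEquiv b ↔ a.1 < b.1 ∨ a.1 = b.1 ∧ a.2 < b.2 := by
  obtain ⟨⟨a₁, ha₁⟩, ⟨a₂, ha₂⟩⟩ := a
  obtain ⟨⟨b₁, hb₁⟩, ⟨b₂, hb₂⟩⟩ := b
  simp only [Fin.lt_def, finProdFinEquiv_apply_val, Fin.mk.injEq]
  constructor
  · intro h
    rcases lt_trichotomy a₁ b₁ with h₁ | rfl | h₁
    · exact .inl h₁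
    · exact .inr ⟨rfl, by omega⟩
    · nlinarith
  · rintro (h | ⟨rfl, h⟩)
    · nlinarith
    · omega

def transposePerm (N : ℕ) : Equiv.Perm (Fin (N * N)) :=
  finProdFinEquiv.symm.trans ((Equiv.prodComm _ _).trans finProdFinEquiv)

@[simp]
lemma transposePerm_finProdFinEquiv {N : ℕ} (p : Fin N × Fin N) :
    transposePerm N (finProdFinEquiv p) = finProdFinEquiv p.swap := by
  simp [transposePerm]

section gridEmbedding

variable {N : ℕ} {S : Finset (ℤ × ℤ)} (hbox : S ⊆ Icc 1 (N : ℤ) ×ˢ Icc 1 (N : ℤ))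

def gridCoords (b : { b // b ∈ S }) : Fin N × Fin N :=
  have hb := hbox b.2
  (⟨(b.1.1 - 1).toNat, by simp only [mem_product, mem_Icc] at hb; omega⟩,
    ⟨(b.1.2 - 1).toNat, by simp only [mem_product, mem_Icc] at hb; omega⟩)

lemma gridCoords_injective : Function.Injective (gridCoords hbox) := by
  intro b b' h
  have hb := hbox b.2
  have hb' := hbox b'.2
  simp only [mem_product, mem_Icc] at hb hb'
  simp only [gridCoords, Prod.mk.injEq, Fin.mk.injEq] at h
  exact Subtype.ext (Prod.ext (by omega) (by omega))

/-- Reading `Fin (N * N)` as `Fin N × Fin N` in lexicographic order, `b = (x, y)` sits at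
`(x - 1, y - 1)`, so the transposed order of the `B`–`C` half graph compares `(y, x)`; `a_i` sits
at `(i, N - 1)`, just below the points with `x ≥ i + 2`, and `c_j` at `(j, 0)`, just above the
points with `y ≤ j`. -/
def gridToABC : GridVtx N S → Fin 3 × Fin (N * N) :=
  Sum.elim (fun i => (0, finProdFinEquiv (i, ⟨N - 1, Nat.sub_one_lt_of_lt i.isLt⟩)))
    (Sum.elim (fun b => (1, finProdFinEquiv (gridCoords hbox b)))
      fun j => (2, finProdFinEquiv (j, ⟨0, j.pos⟩)))

def gridGraphEmbedding : gridGraph N S ↪g abcGraph (N * N) 1 (transposePerm N) where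
  toFun := gridToABC hbox
  inj' := by
    rintro (i | b | j) (i' | b' | j') h <;>
      simp_all [gridToABC, (gridCoords_injective hbox).eq_iff]
  map_rel_iff' {u v} := by
    have hy (b : { b // b ∈ S }) : 1 ≤ b.1.2 ∧ b.1.2 ≤ N := by have := hbox b.2; simp_all
    rcases u with i | b | j <;> rcases v with i' | b' | j' <;>
      simp [gridToABC, abcGraph, gridGraph, gridRel, finProdFinEquiv_lt_finProdFinEquiv,
        (gridCoords_injective hbox).eq_iff, eq_comm] <;>
      simp only [gridCoords, Fin.lt_def, Fin.ext_iff]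
    all_goals first | (have := hy b; omega) | (have := hy b'; omega)

end gridEmbedding

/-- With `X`, `Y` the two expressions, `K X + Y` and `K Y - X` are congruent modulo `K²` to `d`
and `e`, and too small to differ from them; then `(K² + 1) X = K d - e` is too small to be
nonzero. -/
lemma eq_zero_of_abs_add_abs_lt {K d e D E : ℤ} (hK : 0 < K) (hd : |d| < K) (he : |e| < K)
    (h : |d * K - e + D * K ^ 2| + |e * K + d + E * K ^ 2| < K) :
    d * K - e + D * K ^ 2 = 0 ∧ e * K + d + E * K ^ 2 = 0 := by
  set X := d * K - e + D * K ^ 2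
  set Y := e * K + d + E * K ^ 2
  have hKXY : K * X + Y = d := by
    have hlt : |K * X + Y - d| < K ^ 2 := by
      rw [abs_lt] at hd ⊢
      constructor <;> nlinarith [le_abs_self X, neg_abs_le X, le_abs_self Y, neg_abs_le Y]
    linarith [Int.eq_zero_of_abs_lt_dvd ⟨d + K * D + E, by ring⟩ hlt]
  have hKYX : K * Y - X = e := by
    have hlt : |K * Y - X - e| < K ^ 2 := by
      rw [abs_lt] at he ⊢
      constructor <;> nlinarith [le_abs_self X, neg_abs_le X, le_abs_self Y, neg_abs_le Y]
    linarith [Int.eq_zero_of_abs_lt_dvd ⟨e + K * E - D, by ring⟩ hlt]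
  have hX : (K ^ 2 + 1) * X = K * d - e := by linear_combination K * hKXY - hKYX
  have hde : K * d - e = 0 := by
    have hlt : |K * d - e| < K ^ 2 + 1 := by
      rw [abs_lt] at hd he ⊢
      constructor <;> nlinarith
    exact Int.eq_zero_of_abs_lt_dvd ⟨X, hX.symm⟩ hlt
  have hX0 : X = 0 := (mul_eq_zero.1 (hX.trans hde)).resolve_left (by positivity)
  have hd0 : d = 0 := by
    rw [abs_lt] at he
    nlinarith
  exact ⟨hX0, by simpa [hX0, hd0] using hKXY⟩

lemma exists_three_digits {K m : ℤ} (hK : 0 < K) (h0 : 0 ≤ m) (h1 : m < K ^ 3) :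
    ∃ a b c : ℤ, (0 ≤ a ∧ a < K) ∧ (0 ≤ b ∧ b < K) ∧ (0 ≤ c ∧ c < K) ∧
      m = a + b * K + c * K ^ 2 := by
  refine ⟨m % K, m / K % K, m / K / K, ⟨Int.emod_nonneg _ hK.ne', Int.emod_lt_of_pos _ hK⟩,
    ⟨Int.emod_nonneg _ hK.ne', Int.emod_lt_of_pos _ hK⟩,
    ⟨Int.ediv_nonneg (Int.ediv_nonneg h0 hK.le) hK.le, ?_⟩, ?_⟩
  · rw [Int.ediv_lt_iff_lt_mul hK, Int.ediv_lt_iff_lt_mul hK]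
    linarith
  · linear_combination -Int.emod_add_ediv_mul m K - K * Int.emod_add_ediv_mul (m / K) K

section Bset

variable {k : ℕ}

theorem Gk_eq_gridGraph : Gk k = gridGraph (k ^ 3) (Bset k) := by
  unfold Gk gridGraph
  congr 1
  funext u v
  rcases u with i | b | j <;> rcases v with i' | b' | j' <;> rfl

lemma mem_Bset_iff {b : ℤ × ℤ} :
    b ∈ Bset k ↔ ∃ p q i j : ℤ, (1 ≤ p ∧ p ≤ k) ∧ (0 ≤ q ∧ q ≤ k - 1) ∧ (1 ≤ i ∧ i ≤ k) ∧
      (1 ≤ j ∧ j ≤ k) ∧ b = (p * k - q + (i - 1) * k ^ 2, q * k + p + (j - 1) * k ^ 2) := by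
  simp only [Bset, mem_image, mem_product, mem_Icc, Prod.exists]
  constructor
  · rintro ⟨p, q, i, j, ⟨⟨hp, hq⟩, hi, hj⟩, rfl⟩
    exact ⟨p, q, i, j, hp, hq, hi, hj, rfl⟩
  · rintro ⟨p, q, i, j, hp, hq, hi, hj, rfl⟩
    exact ⟨p, q, i, j, ⟨⟨hp, hq⟩, hi, hj⟩, rfl⟩

lemma Bset_subset_box : Bset k ⊆ Icc 1 ((k ^ 3 : ℕ) : ℤ) ×ˢ Icc 1 ((k ^ 3 : ℕ) : ℤ) := by
  intro b hb
  obtain ⟨p, q, i, j, ⟨hp, hp'⟩, ⟨hq, hq'⟩, ⟨hi, hi'⟩, ⟨hj, hj'⟩, rfl⟩ := mem_Bset_iff.1 hb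
  simp only [mem_product, mem_Icc]
  push_cast
  refine ⟨⟨?_, ?_⟩, ?_, ?_⟩ <;> nlinarith

lemma le_card_Bset_column (hk : 1 ≤ k) {x : ℤ} (h1 : 1 ≤ x) (h2 : x ≤ ((k ^ 3 : ℕ) : ℤ)) :
    k ≤ #{b ∈ Bset k | b.1 = x} := by
  have hK : (0 : ℤ) < k := by exact_mod_cast hk
  push_cast at h2
  obtain ⟨a, c, c', ha, hc, hc', hx⟩ := exists_three_digits hK (m := x - 1) (by omega) (by omega)
  let f : ℕ → ℤ × ℤ := fun t => (x, (k - 1 - a) * k + (c + 1) + t * k ^ 2)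
  have hf : Function.Injective f := fun t t' h => by
    simp only [f, Prod.mk.injEq, true_and, add_right_inj] at h
    exact_mod_cast mul_right_cancel₀ (by positivity) h
  calc k = #((range k).image f) := by rw [card_image_of_injective _ hf, card_range]
    _ ≤ _ := card_le_card fun b hb => ?_
  obtain ⟨t, ht, rfl⟩ := mem_image.1 hb
  rw [mem_range] at ht
  refine mem_filter.2 ⟨mem_Bset_iff.2 ⟨c + 1, k - 1 - a, c' + 1, t + 1, ⟨by omega, by omega⟩,
    ⟨by omega, by omega⟩, ⟨by omega, by omega⟩, ⟨by omega, by omega⟩,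
    Prod.ext (by linear_combination hx) (by ring)⟩, rfl⟩

lemma le_card_Bset_row (hk : 1 ≤ k) {y : ℤ} (h1 : 1 ≤ y) (h2 : y ≤ ((k ^ 3 : ℕ) : ℤ)) :
    k ≤ #{b ∈ Bset k | b.2 = y} := by
  have hK : (0 : ℤ) < k := by exact_mod_cast hk
  push_cast at h2
  obtain ⟨a, c, c', ha, hc, hc', hy⟩ := exists_three_digits hK (m := y - 1) (by omega) (by omega)
  let f : ℕ → ℤ × ℤ := fun t => ((a + 1) * k - c + t * k ^ 2, y)
  have hf : Function.Injective f := fun t t' h => by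
    simp only [f, Prod.mk.injEq, and_true, add_right_inj] at h
    exact_mod_cast mul_right_cancel₀ (by positivity) h
  calc k = #((range k).image f) := by rw [card_image_of_injective _ hf, card_range]
    _ ≤ _ := card_le_card fun b hb => ?_
  obtain ⟨t, ht, rfl⟩ := mem_image.1 hb
  rw [mem_range] at ht
  refine mem_filter.2 ⟨mem_Bset_iff.2 ⟨a + 1, c, t + 1, c' + 1, ⟨by omega, by omega⟩,
    ⟨by omega, by omega⟩, ⟨by omega, by omega⟩, ⟨by omega, by omega⟩,
    Prod.ext (by ring) (by linear_combination hy)⟩, rfl⟩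

lemma le_abs_add_abs_of_mem_Bset {b b' : ℤ × ℤ} (hb : b ∈ Bset k) (hb' : b' ∈ Bset k)
    (hne : b ≠ b') : (k : ℤ) ≤ |b.1 - b'.1| + |b.2 - b'.2| := by
  obtain ⟨p, q, i, j, hp, hq, hi, hj, rfl⟩ := mem_Bset_iff.1 hb
  obtain ⟨p', q', i', j', hp', hq', hi', hj', rfl⟩ := mem_Bset_iff.1 hb'
  by_contra! hlt
  obtain ⟨hx, hy⟩ := eq_zero_of_abs_add_abs_lt (K := k) (d := p - p') (e := q - q')
    (D := i - i') (E := j - j') (by omega) (abs_lt.2 ⟨by omega, by omega⟩)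
    (abs_lt.2 ⟨by omega, by omega⟩) (lt_of_eq_of_lt (by ring_nf) hlt)
  exact hne (Prod.ext (by linear_combination hx) (by linear_combination hy))

end Bset

/-- For every `k ≥ 2` the graph `G_k` satisfies `sd(u,v) ≥ k` for every pair of
distinct vertices; hence the class of ABC graphs (and hence the class of interval
graphs) has unbounded symmetric difference: for every `k` there is an ABC graph
with an induced subgraph all of whose pairs have symmetric difference at least `k`,
and an interval graph all of whose pairs have symmetric difference at least `k`. -/
theorem Gk_sd_ge_and_unbounded_sd (k : ℕ) (hk : 2 ≤ k) :
    (∀ u v : GkVtx k, u ≠ v → k ≤ sdPair (Gk k) u v) ∧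
    (∃ (W : Type) (_ : Fintype W) (H : SimpleGraph W), IsABCGraph H ∧
      ∃ s : Finset W, 2 ≤ s.card ∧
        ∀ u v : ↥(↑s : Set W), u ≠ v → k ≤ sdPair (H.induce (↑s : Set W)) u v) ∧
    (∃ (n : ℕ) (G : SimpleGraph (Fin n)), IsIntervalGraph G ∧ 2 ≤ n ∧
      ∀ u v : Fin n, u ≠ v → k ≤ sdPair G u v) := by
  rw [Gk_eq_gridGraph]
  have hsd : ∀ u v, u ≠ v → k ≤ sdPair (gridGraph (k ^ 3) (Bset k)) u v :=
    gridGraph_le_sdPair Bset_subset_box (fun _ => le_card_Bset_column (by omega))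
      (fun _ => le_card_Bset_row (by omega))
      (fun _ hb _ hb' => le_abs_add_abs_of_mem_Bset hb hb') (lt_self_pow₀ (by omega) (by norm_num))
  have hcard : 2 ≤ Fintype.card (GkVtx k) := by
    simp only [Fintype.card_sum, Fintype.card_fin]
    have := Nat.one_le_pow 3 k (by omega)
    omega
  let φ := gridGraphEmbedding (Bset_subset_box (k := k))
  have hABC := isABCGraph_abcGraph (k ^ 3 * k ^ 3) 1 (transposePerm (k ^ 3))
  obtain ⟨s, hs, ⟨e⟩⟩ := φ.exists_iso_induce
  let ψ := SimpleGraph.Iso.map (Fintype.equivFin (GkVtx k)) (gridGraph (k ^ 3) (Bset k))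
  exact ⟨hsd, ⟨_, inferInstance, _, hABC, s, hs ▸ hcard, e.le_sdPair hsd⟩,
    ⟨_, _, (hABC.isIntervalGraph.of_embedding φ).of_embedding ψ.symm.toEmbedding, hcard,
      ψ.le_sdPair hsd⟩⟩
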